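/- Consider a repetitive process y_k = G u_k + w + d_k with G ∈ ℝ^{m×n}, w ∈ ℝ^m, and disturbances d_k ∈ D, where D ⊆ ℝ^m is bounded. Let U ⊆ ℝ^n, Y ⊆ ℝ^m, let X ⊆ ℝ^n be a nonempty closed convex set such that every u ∈ X satisfies u ∈ U and G u + w + d ∈ Y for all d ∈ D. Let W ∈ ℝ^{n×n} be symmetric positive definite, M ∈ ℝ^{m×n}, Q ∈ ℝ^{m×m}, H̃ ∈ ℝ^{n×n}, f̃ ∈ ℝ^n, F̃(u) = H̃u + f̃, and suppose μ̃ > 0, L̃ > 0 satisfy μ̃‖d‖_W² ≤ dᵀH̃d and ‖W^{-1}H̃d‖_W ≤ L̃‖d‖_W for all d ∈ ℝ^n, with step size α ∈ (0, 2μ̃/L̃²). Let ū ∈ X satisfy ⟨F̃(ū), v − ū⟩ ≥ 0 for all v ∈ X. Generate iterates by u_0 ∈ X and u_{k+1} = the W-weighted projection onto X of u_k − αW^{-1}(F̃(u_k) + MᵀQ d_k). Then for all k ≥ 0: u_k ∈ U, G u_k + w + d_k ∈ Y, and ‖u_k − ū‖_W ≤ η^k ‖u_0 − ū‖_W + γ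 · sup_{j≥0}‖d_j‖, where η = √(1 − 2αμ̃ + α²L̃²) ∈ [0,1) and γ = α‖W^{-1/2}MᵀQ‖/(1 − η). -/

import Mathlib

open Matrix Finset

noncomputable def wip {n : ℕ} (W : Matrix (Fin n) (Fin n) ℝ) (x y : Fin n → ℝ) : ℝ :=
  x ⬝ᵥ W.mulVec y
noncomputable def wnorm {n : ℕ} (W : Matrix (Fin n) (Fin n) ℝ) (x : Fin n → ℝ) : ℝ :=
  Real.sqrt (x ⬝ᵥ W.mulVec x)
noncomputable def enorm' {n : ℕ} (x : Fin n → ℝ) : ℝ := Real.sqrt (x ⬝ᵥ x)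
noncomputable def opNorm {m n : ℕ} (A : Matrix (Fin m) (Fin n) ℝ) : ℝ :=
  ‖LinearMap.toContinuousLinearMap (Matrix.toEuclideanLin A)‖

/-!
Transporting by `x ↦ S x` (with `S * S = W`) turns `‖·‖_W` into the Euclidean norm and
`W`-projections onto `X` into Euclidean projections onto a convex set. Both `u (k + 1)` and `ū`
satisfy the variational inequality of such a projection (`ū` is the projection of
`ū - α W⁻¹ F̃ ū`), so nonexpansiveness bounds `‖u (k + 1) - ū‖_W` by
`‖(I - α W⁻¹ H̃) (u k - ū)‖_W + α ‖S⁻¹ Mᵀ Q d k‖`. Strong monotonicity and the Lipschitz bound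
make `I - α W⁻¹ H̃` an `η`-contraction, and the recursion `x (k + 1) ≤ η x k + β` sums to the
geometric bound.
-/

open InnerProductSpace

lemma dotProduct_eq_inner_toLp {ι : Type*} [Fintype ι] (x y : ι → ℝ) :
    x ⬝ᵥ y = ⟪WithLp.toLp 2 x, WithLp.toLp 2 y⟫_ℝ := by
  rw [EuclideanSpace.inner_toLp_toLp, star_trivial, dotProduct_comm]

lemma enorm'_eq_norm_toLp {n : ℕ} (x : Fin n → ℝ) : enorm' x = ‖WithLp.toLp 2 x‖ := by
  rw [enorm', dotProduct_eq_inner_toLp, real_inner_self_eq_norm_sq, Real.sqrt_sq (norm_nonneg _)]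

lemma enorm'_mulVec_le {m n : ℕ} (A : Matrix (Fin m) (Fin n) ℝ) (x : Fin n → ℝ) :
    enorm' (A *ᵥ x) ≤ opNorm A * enorm' x := by
  rw [enorm'_eq_norm_toLp, enorm'_eq_norm_toLp]
  exact (LinearMap.toContinuousLinearMap (Matrix.toEuclideanLin A)).le_opNorm _

lemma bddAbove_range_enorm' {ι : Type*} {m : ℕ} {D : Set (Fin m → ℝ)}
    (hD : Bornology.IsBounded D) {d : ι → Fin m → ℝ} (hd : ∀ j, d j ∈ D) :
    BddAbove (Set.range fun j => enorm' (d j)) := by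
  obtain ⟨R, hR⟩ := isBounded_iff_forall_norm_le.mp
    ((EuclideanSpace.equiv (Fin m) ℝ).symm.lipschitz.isBounded_image hD)
  refine ⟨R, Set.forall_mem_range.mpr fun j => ?_⟩
  rw [enorm'_eq_norm_toLp]
  exact hR _ ⟨d j, hd j, rfl⟩

section RealInnerProductSpace

variable {F : Type*} [NormedAddCommGroup F] [InnerProductSpace ℝ F]

lemma real_inner_sub_le_zero_of_forall_norm_sub_le {K : Set F} (hK : Convex ℝ K) {p z : F}
    (hp : p ∈ K) (hmin : ∀ w ∈ K, ‖p - z‖ ≤ ‖w - z‖) :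
    ∀ w ∈ K, ⟪z - p, w - p⟫_ℝ ≤ 0 := by
  have : Nonempty K := ⟨⟨p, hp⟩⟩
  refine (norm_eq_iInf_iff_real_inner_le_zero hK hp).mp (le_antisymm ?_ ?_)
  · exact le_ciInf fun w => by simpa only [norm_sub_rev z] using hmin w w.2
  · refine ciInf_le ⟨0, ?_⟩ (⟨p, hp⟩ : K)
    rintro _ ⟨w, rfl⟩
    exact norm_nonneg _

lemma norm_sub_le_of_real_inner_sub_le_zero {K : Set F} {p p' z z' : F} (hp : p ∈ K)
    (hp' : p' ∈ K) (hz : ∀ w ∈ K, ⟪z - p, w - p⟫_ℝ ≤ 0)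
    (hz' : ∀ w ∈ K, ⟪z' - p', w - p'⟫_ℝ ≤ 0) :
    ‖p - p'‖ ≤ ‖z - z'‖ := by
  have h : ‖p - p'‖ ^ 2 ≤ ‖z - z'‖ * ‖p - p'‖ := calc
    ‖p - p'‖ ^ 2 ≤ ⟪z - z', p - p'⟫_ℝ + ⟪z - p, p' - p⟫_ℝ + ⟪z' - p', p - p'⟫_ℝ := by
        rw [← real_inner_self_eq_norm_sq]
        have : ⟪z - p, p' - p⟫_ℝ = -⟪z - p, p - p'⟫_ℝ := by
          rw [← inner_neg_right, neg_sub]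
        rw [this, ← sub_eq_add_neg, ← inner_sub_left, ← inner_add_left]
        apply le_of_eq; congr 1; abel
    _ ≤ ⟪z - z', p - p'⟫_ℝ := by linarith [hz p' hp', hz' p hp]
    _ ≤ ‖z - z'‖ * ‖p - p'‖ := real_inner_le_norm _ _
  nlinarith [norm_nonneg (p - p'), norm_nonneg (z - z')]

lemma norm_sub_smul_le_sqrt_mul_norm {a b : F} {μ L α : ℝ} (hμ : μ * ‖a‖ ^ 2 ≤ ⟪a, b⟫_ℝ)
    (hL : ‖b‖ ≤ L * ‖a‖) (hα : 0 ≤ α) :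
    ‖a - α • b‖ ≤ √(1 - 2 * α * μ + α ^ 2 * L ^ 2) * ‖a‖ := by
  have hsq : ‖a - α • b‖ ^ 2 ≤ (1 - 2 * α * μ + α ^ 2 * L ^ 2) * ‖a‖ ^ 2 := by
    rw [norm_sub_sq_real, real_inner_smul_right, norm_smul, Real.norm_eq_abs, mul_pow, sq_abs]
    have hb : ‖b‖ ^ 2 ≤ L ^ 2 * ‖a‖ ^ 2 := by
      rw [← mul_pow]; exact pow_le_pow_left₀ (norm_nonneg b) hL 2
    nlinarith [mul_le_mul_of_nonneg_left hμ hα, mul_le_mul_of_nonneg_left hb (sq_nonneg α)]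
  calc ‖a - α • b‖ = √(‖a - α • b‖ ^ 2) := (Real.sqrt_sq (norm_nonneg _)).symm
    _ ≤ √((1 - 2 * α * μ + α ^ 2 * L ^ 2) * ‖a‖ ^ 2) := Real.sqrt_le_sqrt hsq
    _ = _ := by rw [Real.sqrt_mul' _ (sq_nonneg _), Real.sqrt_sq (norm_nonneg _)]

end RealInnerProductSpace

lemma sqrt_one_sub_two_mul_add_sq_lt_one {μ L α : ℝ} (hL : 0 < L) (hα : 0 < α)
    (hα' : α < 2 * μ / L ^ 2) : √(1 - 2 * α * μ + α ^ 2 * L ^ 2) < 1 := by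
  have h : α * L ^ 2 < 2 * μ := (lt_div_iff₀ (by positivity)).mp hα'
  rw [Real.sqrt_lt' one_pos]
  nlinarith [mul_lt_mul_of_pos_left h hα]

lemma le_pow_mul_add_div_of_le_mul_add {x : ℕ → ℝ} {η β : ℝ} (hη : 0 ≤ η) (hη' : η < 1)
    (hβ : 0 ≤ β) (hx : ∀ k, x (k + 1) ≤ η * x k + β) (k : ℕ) :
    x k ≤ η ^ k * x 0 + β / (1 - η) := by
  have h1η : 0 < 1 - η := sub_pos.mpr hη'
  induction k with
  | zero => simpa using div_nonneg hβ h1η.le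
  | succ k ih =>
    calc x (k + 1) ≤ η * (η ^ k * x 0 + β / (1 - η)) + β :=
          (hx k).trans (by gcongr)
      _ = η ^ (k + 1) * x 0 + β / (1 - η) := by field_simp; ring

section WeightedNorm

variable {n : ℕ} {W S : Matrix (Fin n) (Fin n) ℝ}

def mulVecToLp (S : Matrix (Fin n) (Fin n) ℝ) : (Fin n → ℝ) →ₗ[ℝ] EuclideanSpace ℝ (Fin n) :=
  (WithLp.linearEquiv 2 ℝ (Fin n → ℝ)).symm.toLinearMap ∘ₗ S.mulVecLin

lemma mulVecToLp_apply (x : Fin n → ℝ) : mulVecToLp S x = WithLp.toLp 2 (S *ᵥ x) := rfl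

lemma dotProduct_mulVec_eq_inner_mulVecToLp (hS : S.IsSymm) (hSW : S * S = W)
    (x y : Fin n → ℝ) : x ⬝ᵥ W *ᵥ y = ⟪mulVecToLp S x, mulVecToLp S y⟫_ℝ := by
  rw [mulVecToLp_apply, mulVecToLp_apply, ← dotProduct_eq_inner_toLp, ← hSW, ← mulVec_mulVec,
    dotProduct_mulVec, ← mulVec_transpose, hS.eq]

lemma wnorm_eq_norm_mulVecToLp (hS : S.IsSymm) (hSW : S * S = W) (x : Fin n → ℝ) :
    wnorm W x = ‖mulVecToLp S x‖ := by
  rw [wnorm, dotProduct_mulVec_eq_inner_mulVecToLp hS hSW, real_inner_self_eq_norm_sq,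
    Real.sqrt_sq (norm_nonneg _)]

lemma mulVecToLp_inv_mulVec (hS : IsUnit S) (hSW : S * S = W) (y : Fin n → ℝ) :
    mulVecToLp S (W⁻¹ *ᵥ y) = WithLp.toLp 2 (S⁻¹ *ᵥ y) := by
  rw [mulVecToLp_apply, mulVec_mulVec, ← hSW, Matrix.mul_inv_rev, ← Matrix.mul_assoc,
    mul_nonsing_inv _ ((isUnit_iff_isUnit_det S).mp hS), Matrix.one_mul]

lemma inner_mulVecToLp_inv_mulVec (hS : S.IsSymm) (hS' : IsUnit S) (hSW : S * S = W)
    (x y : Fin n → ℝ) : ⟪mulVecToLp S x, mulVecToLp S (W⁻¹ *ᵥ y)⟫_ℝ = x ⬝ᵥ y := by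
  rw [← dotProduct_mulVec_eq_inner_mulVecToLp hS hSW, mulVec_mulVec,
    mul_nonsing_inv _ ((isUnit_iff_isUnit_det W).mp (hSW ▸ hS'.mul hS')), one_mulVec]

lemma inner_mulVecToLp_sub_le_zero_of_dotProduct_nonneg {X : Set (Fin n → ℝ)}
    {g ubar : Fin n → ℝ} {α : ℝ} (hS : S.IsSymm) (hS' : IsUnit S) (hSW : S * S = W)
    (hα : 0 ≤ α) (hVI : ∀ v ∈ X, 0 ≤ g ⬝ᵥ (v - ubar)) :
    ∀ w ∈ mulVecToLp S '' X, ⟪mulVecToLp S (ubar - α • W⁻¹ *ᵥ g) - mulVecToLp S ubar,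
      w - mulVecToLp S ubar⟫_ℝ ≤ 0 := by
  rintro _ ⟨v, hv, rfl⟩
  rw [← map_sub, ← map_sub, sub_sub_cancel_left, map_neg, map_smul, inner_neg_left,
    real_inner_smul_left, real_inner_comm, inner_mulVecToLp_inv_mulVec hS hS' hSW,
    dotProduct_comm]
  exact neg_nonpos.mpr (mul_nonneg hα (hVI v hv))

lemma wnorm_sub_le_of_projected_step {X : Set (Fin n → ℝ)} {H : Matrix (Fin n) (Fin n) ℝ}
    {f r x x' ubar : Fin n → ℝ} {μ L α : ℝ} (hS : S.IsSymm) (hS' : IsUnit S)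
    (hSW : S * S = W) (hX : Convex ℝ X)
    (hmono : ∀ d, μ * wnorm W d ^ 2 ≤ d ⬝ᵥ H *ᵥ d)
    (hlip : ∀ d, wnorm W (W⁻¹ *ᵥ (H *ᵥ d)) ≤ L * wnorm W d) (hα : 0 ≤ α)
    (hubar : ubar ∈ X) (hVI : ∀ v ∈ X, 0 ≤ (H *ᵥ ubar + f) ⬝ᵥ (v - ubar)) (hx' : x' ∈ X)
    (hmin : ∀ v ∈ X, wnorm W (x' - (x - α • W⁻¹ *ᵥ (H *ᵥ x + f + r)))
      ≤ wnorm W (v - (x - α • W⁻¹ *ᵥ (H *ᵥ x + f + r)))) :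
    wnorm W (x' - ubar)
      ≤ √(1 - 2 * α * μ + α ^ 2 * L ^ 2) * wnorm W (x - ubar) + α * enorm' (S⁻¹ *ᵥ r) := by
  set Φ := mulVecToLp S
  have hwn := wnorm_eq_norm_mulVecToLp hS hSW
  set z := x - α • W⁻¹ *ᵥ (H *ᵥ x + f + r)
  set zbar := ubar - α • W⁻¹ *ᵥ (H *ᵥ ubar + f)
  set e := x - ubar
  have hz : ∀ w ∈ Φ '' X, ⟪Φ z - Φ x', w - Φ x'⟫_ℝ ≤ 0 := by
    refine real_inner_sub_le_zero_of_forall_norm_sub_le (hX.linear_image Φ)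
      (Set.mem_image_of_mem Φ hx') ?_
    rintro _ ⟨v, hv, rfl⟩
    simpa only [hwn, map_sub] using hmin v hv
  have hzbar := inner_mulVecToLp_sub_le_zero_of_dotProduct_nonneg hS hS' hSW hα hVI
  have hdiff : Φ z - Φ zbar
      = (Φ e - α • Φ (W⁻¹ *ᵥ (H *ᵥ e))) - α • WithLp.toLp 2 (S⁻¹ *ᵥ r) := by
    rw [← mulVecToLp_inv_mulVec hS' hSW, ← map_smul, ← map_smul, ← map_sub, ← map_sub,
      ← map_sub]
    congr 1
    simp only [z, zbar, e, Matrix.mulVec_add, Matrix.mulVec_sub]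
    module
  have hmono' : μ * ‖Φ e‖ ^ 2 ≤ ⟪Φ e, Φ (W⁻¹ *ᵥ (H *ᵥ e))⟫_ℝ := by
    rw [inner_mulVecToLp_inv_mulVec hS hS' hSW, ← hwn]
    exact hmono e
  have hlip' : ‖Φ (W⁻¹ *ᵥ (H *ᵥ e))‖ ≤ L * ‖Φ e‖ := by simpa only [hwn] using hlip e
  simp only [hwn]
  rw [map_sub Φ x' ubar]
  calc ‖Φ x' - Φ ubar‖ ≤ ‖Φ z - Φ zbar‖ :=
        norm_sub_le_of_real_inner_sub_le_zero (Set.mem_image_of_mem Φ hx')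
          (Set.mem_image_of_mem Φ hubar) hz hzbar
    _ ≤ ‖Φ e - α • Φ (W⁻¹ *ᵥ (H *ᵥ e))‖ + ‖α • WithLp.toLp 2 (S⁻¹ *ᵥ r)‖ :=
        hdiff ▸ norm_sub_le _ _
    _ ≤ √(1 - 2 * α * μ + α ^ 2 * L ^ 2) * ‖Φ e‖ + α * enorm' (S⁻¹ *ᵥ r) := by
        rw [norm_smul, Real.norm_of_nonneg hα, enorm'_eq_norm_toLp]
        gcongr
        exact norm_sub_smul_le_sqrt_mul_norm hmono' hlip' hα

end WeightedNorm

theorem closed_loop_iss_general {n m : ℕ}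
    (G : Matrix (Fin m) (Fin n) ℝ) (w : Fin m → ℝ)
    (D : Set (Fin m → ℝ)) (hD : Bornology.IsBounded D)
    (U : Set (Fin n → ℝ)) (Y : Set (Fin m → ℝ))
    (X : Set (Fin n → ℝ)) (hXconv : Convex ℝ X)
    (hXU : ∀ u ∈ X, u ∈ U ∧ ∀ d ∈ D, G.mulVec u + w + d ∈ Y)
    (W : Matrix (Fin n) (Fin n) ℝ)
    (S : Matrix (Fin n) (Fin n) ℝ) (hS : S.PosDef) (hSsq : S * S = W)
    (M : Matrix (Fin m) (Fin n) ℝ) (Q : Matrix (Fin m) (Fin m) ℝ)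
    (Ht : Matrix (Fin n) (Fin n) ℝ) (ft : Fin n → ℝ)
    (μt Lt : ℝ) (hL : 0 < Lt)
    (hmono : ∀ d : Fin n → ℝ, μt * (wnorm W d) ^ 2 ≤ d ⬝ᵥ Ht.mulVec d)
    (hlip : ∀ d : Fin n → ℝ, wnorm W (W⁻¹.mulVec (Ht.mulVec d)) ≤ Lt * wnorm W d)
    (α : ℝ) (hα : α ∈ Set.Ioo 0 (2 * μt / Lt ^ 2))
    (ubar : Fin n → ℝ) (hubar : ubar ∈ X)
    (hVI : ∀ v ∈ X, 0 ≤ (Ht.mulVec ubar + ft) ⬝ᵥ (v - ubar))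
    (d : ℕ → Fin m → ℝ) (hd : ∀ k, d k ∈ D)
    (u : ℕ → Fin n → ℝ) (hu0 : u 0 ∈ X)
    (hproj : ∀ k, u (k + 1) ∈ X ∧ ∀ v ∈ X,
      wnorm W (u (k + 1) -
          (u k - α • W⁻¹.mulVec ((Ht.mulVec (u k) + ft) + (Mᵀ * Q).mulVec (d k))))
        ≤ wnorm W (v -
          (u k - α • W⁻¹.mulVec ((Ht.mulVec (u k) + ft) + (Mᵀ * Q).mulVec (d k))))) :
    0 ≤ Real.sqrt (1 - 2 * α * μt + α ^ 2 * Lt ^ 2) ∧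
    Real.sqrt (1 - 2 * α * μt + α ^ 2 * Lt ^ 2) < 1 ∧
    ∀ k : ℕ, u k ∈ U ∧ G.mulVec (u k) + w + d k ∈ Y ∧
      wnorm W (u k - ubar)
        ≤ (Real.sqrt (1 - 2 * α * μt + α ^ 2 * Lt ^ 2)) ^ k * wnorm W (u 0 - ubar)
          + (α * opNorm (S⁻¹ * (Mᵀ * Q)) / (1 - Real.sqrt (1 - 2 * α * μt + α ^ 2 * Lt ^ 2)))
            * ⨆ j : ℕ, enorm' (d j) := by
  obtain ⟨hα0, hα2⟩ := hα
  have hη1 := sqrt_one_sub_two_mul_add_sq_lt_one hL hα0 hα2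
  have hX : ∀ k, u k ∈ X := fun k => Nat.rec hu0 (fun k _ => (hproj k).1) k
  have hsup : ∀ k, enorm' (d k) ≤ ⨆ j, enorm' (d j) := le_ciSup (bddAbove_range_enorm' hD hd)
  have hc : 0 ≤ α * opNorm (S⁻¹ * (Mᵀ * Q)) := mul_nonneg hα0.le (norm_nonneg _)
  have hstep : ∀ k, wnorm W (u (k + 1) - ubar)
      ≤ √(1 - 2 * α * μt + α ^ 2 * Lt ^ 2) * wnorm W (u k - ubar)
        + α * opNorm (S⁻¹ * (Mᵀ * Q)) * ⨆ j, enorm' (d j) := fun k => by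
    refine (wnorm_sub_le_of_projected_step (isHermitian_iff_isSymm.mp hS.isHermitian)
      hS.isUnit hSsq hXconv hmono hlip hα0.le hubar hVI (hproj k).1 (hproj k).2).trans ?_
    rw [mulVec_mulVec, mul_assoc α]
    exact add_le_add_right (mul_le_mul_of_nonneg_left ((enorm'_mulVec_le _ _).trans
      (mul_le_mul_of_nonneg_left (hsup k) (norm_nonneg _))) hα0.le) _
  refine ⟨Real.sqrt_nonneg _, hη1, fun k => ⟨(hXU _ (hX k)).1, (hXU _ (hX k)).2 _ (hd k), ?_⟩⟩
  rw [div_mul_eq_mul_div]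
  exact le_pow_mul_add_div_of_le_mul_add (x := fun k => wnorm W (u k - ubar))
    (Real.sqrt_nonneg _) hη1
    (mul_nonneg hc ((Real.sqrt_nonneg _).trans (hsup 0))) hstep k

/-- Theorem 1: the closed-loop ILC system y_k = Gu_k + w + d_k,
u_{k+1} = Π_X^W[u_k − αW⁻¹(F̃(u_k) + MᵀQd_k)], satisfies constraints (u_k ∈ U, y_k ∈ Y)
and is input-to-state stable about the fixed point ū:
‖u_k − ū‖_W ≤ ηᵏ‖u_0 − ū‖_W + γ sup_j ‖d_j‖ with η = √(1 − 2αμ̃ + α²L̃²) ∈ [0,1) and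
γ = α‖W^{-1/2}MᵀQ‖/(1 − η). S is the symmetric positive definite square root of W. -/
theorem closed_loop_iss {n m : ℕ}
    (G : Matrix (Fin m) (Fin n) ℝ) (w : Fin m → ℝ)
    (D : Set (Fin m → ℝ)) (hD : Bornology.IsBounded D)
    (U : Set (Fin n → ℝ)) (Y : Set (Fin m → ℝ))
    (X : Set (Fin n → ℝ)) (hXne : X.Nonempty) (hXcl : IsClosed X) (hXconv : Convex ℝ X)
    (hXU : ∀ u ∈ X, u ∈ U ∧ ∀ d ∈ D, G.mulVec u + w + d ∈ Y)
    (W : Matrix (Fin n) (Fin n) ℝ) (hW : W.PosDef)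
    (S : Matrix (Fin n) (Fin n) ℝ) (hS : S.PosDef) (hSsq : S * S = W)
    (M : Matrix (Fin m) (Fin n) ℝ) (Q : Matrix (Fin m) (Fin m) ℝ)
    (Ht : Matrix (Fin n) (Fin n) ℝ) (ft : Fin n → ℝ)
    (μt Lt : ℝ) (hμ : 0 < μt) (hL : 0 < Lt)
    (hmono : ∀ d : Fin n → ℝ, μt * (wnorm W d) ^ 2 ≤ d ⬝ᵥ Ht.mulVec d)
    (hlip : ∀ d : Fin n → ℝ, wnorm W (W⁻¹.mulVec (Ht.mulVec d)) ≤ Lt * wnorm W d)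
    (α : ℝ) (hα : α ∈ Set.Ioo 0 (2 * μt / Lt ^ 2))
    (ubar : Fin n → ℝ) (hubar : ubar ∈ X)
    (hVI : ∀ v ∈ X, 0 ≤ (Ht.mulVec ubar + ft) ⬝ᵥ (v - ubar))
    (d : ℕ → Fin m → ℝ) (hd : ∀ k, d k ∈ D)
    (u : ℕ → Fin n → ℝ) (hu0 : u 0 ∈ X)
    (hproj : ∀ k, u (k + 1) ∈ X ∧ ∀ v ∈ X,
      wnorm W (u (k + 1) -
          (u k - α • W⁻¹.mulVec ((Ht.mulVec (u k) + ft) + (Mᵀ * Q).mulVec (d k))))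
        ≤ wnorm W (v -
          (u k - α • W⁻¹.mulVec ((Ht.mulVec (u k) + ft) + (Mᵀ * Q).mulVec (d k))))) :
    0 ≤ Real.sqrt (1 - 2 * α * μt + α ^ 2 * Lt ^ 2) ∧
    Real.sqrt (1 - 2 * α * μt + α ^ 2 * Lt ^ 2) < 1 ∧
    ∀ k : ℕ, u k ∈ U ∧ G.mulVec (u k) + w + d k ∈ Y ∧
      wnorm W (u k - ubar)
        ≤ (Real.sqrt (1 - 2 * α * μt + α ^ 2 * Lt ^ 2)) ^ k * wnorm W (u 0 - ubar)
          + (α * opNorm (S⁻¹ * (Mᵀ * Q)) / (1 - Real.sqrt (1 - 2 * α * μt + α ^ 2 * Lt ^ 2)))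
            * ⨆ j : ℕ, enorm' (d j) :=
  closed_loop_iss_general G w D hD U Y X hXconv hXU W S hS hSsq M Q Ht ft μt Lt hL hmono hlip α hα
    ubar hubar hVI d hd u hu0 hproj
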